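/- Let A be a real M×N matrix such that AA* is invertible, and let γ_t(A) denote its preconditioned restricted isometry constant of order t. Let v ∈ ℝ^N be a vector with supp(v) = T″ and let T′ be an index set with |T′ ∪ T″| ≤ t. Then ‖[(I − A*(AA*)⁻¹A)v]_{T′}‖₂ ≤ γ_t(A) · ‖v‖₂. -/

import Mathlib

/-!
`P = A*(AA*)⁻¹A` is the orthogonal projection onto the row space of `A` and
`‖(AA*)^{-1/2}Ax‖² = ⟨x, Px⟩`, so for every `t`-sparse `x` the complementary projection
`Q = I - P` satisfies `‖Qx‖² = ‖x‖² - ‖(AA*)^{-1/2}Ax‖² ≤ γ‖x‖²`. Both `v` and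
`w = (Qv)_{T'}` are `t`-sparse, and since `Q` is a symmetric idempotent,
`‖w‖² = ⟨w, Qv⟩ = ⟨Qw, Qv⟩ ≤ ‖Qw‖‖Qv‖ ≤ γ‖w‖‖v‖`. This holds for every admissible `γ`
in the definition of `γ_t(A)`, hence for their infimum.
-/

open Matrix

/-- The Euclidean (ℓ²) norm of a vector in ℝⁿ. -/
noncomputable def norm2 {n : ℕ} (x : Fin n → ℝ) : ℝ := Real.sqrt (∑ i, x i ^ 2)

/-- `x` is `s`-sparse: it has at most `s` nonzero entries. -/
def sparse {n : ℕ} (s : ℕ) (x : Fin n → ℝ) : Prop :=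
  (Finset.univ.filter fun i => x i ≠ 0).card ≤ s

/-- `restrict T x` is the vector agreeing with `x` on `T` and zero outside `T`. -/
def restrict {n : ℕ} (T : Finset (Fin n)) (x : Fin n → ℝ) : Fin n → ℝ :=
  fun i => if i ∈ T then x i else 0

/-- The preconditioned matrix `(AAᴴ)^{-1/2} A`, where `(AAᴴ)^{-1/2}` is the inverse of the
positive semidefinite square root of `AAᴴ`. -/
noncomputable def precond {M N : ℕ} (A : Matrix (Fin M) (Fin N) ℝ) :
    Matrix (Fin M) (Fin N) ℝ :=
  (((Matrix.posSemidef_self_mul_conjTranspose A).1.eigenvectorUnitary : Matrix (Fin M) (Fin M) ℝ) *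
    diagonal (fun i => Real.sqrt ((Matrix.posSemidef_self_mul_conjTranspose A).1.eigenvalues i)) *
    (star (Matrix.posSemidef_self_mul_conjTranspose A).1.eigenvectorUnitary : Matrix (Fin M) (Fin M) ℝ))⁻¹ * A

/-- The preconditioned restricted isometry constant `γ_s(A)`: the smallest `γ ≥ 0` such that
`(1-γ)‖x‖₂² ≤ ‖(AAᴴ)^{-1/2}Ax‖₂²` for all `s`-sparse `x`. -/
noncomputable def pripConst {M N : ℕ} (A : Matrix (Fin M) (Fin N) ℝ) (s : ℕ) : ℝ :=
  sInf {γ : ℝ | 0 ≤ γ ∧ ∀ x : Fin N → ℝ, sparse s x →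
    (1 - γ) * norm2 x ^ 2 ≤ norm2 ((precond A).mulVec x) ^ 2}

/-- The restricted isometry constant `δ_s(B)`: the smallest `δ ≥ 0` such that
`(1-δ)‖x‖₂² ≤ ‖Bx‖₂² ≤ (1+δ)‖x‖₂²` for all `s`-sparse `x`. -/
noncomputable def ripConst {m n : ℕ} (B : Matrix (Fin m) (Fin n) ℝ) (s : ℕ) : ℝ :=
  sInf {δ : ℝ | 0 ≤ δ ∧ ∀ x : Fin n → ℝ, sparse s x →
    (1 - δ) * norm2 x ^ 2 ≤ norm2 (B.mulVec x) ^ 2 ∧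
      norm2 (B.mulVec x) ^ 2 ≤ (1 + δ) * norm2 x ^ 2}

/-- `θ_t(A) = δ_t((AAᴴ)⁻¹A)`. -/
noncomputable def thetaConst {M N : ℕ} (A : Matrix (Fin M) (Fin N) ℝ) (t : ℕ) : ℝ :=
  ripConst ((A * Aᴴ)⁻¹ * A) t

open scoped MatrixOrder

section SparseVectors

variable {n : ℕ}

lemma norm2_nonneg (x : Fin n → ℝ) : 0 ≤ norm2 x := Real.sqrt_nonneg _

lemma norm2_sq (x : Fin n → ℝ) : norm2 x ^ 2 = x ⬝ᵥ x := by
  rw [norm2, Real.sq_sqrt (Finset.sum_nonneg fun i _ => sq_nonneg _)]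
  simp only [dotProduct, sq]

lemma dotProduct_le_norm2_mul_norm2 (x y : Fin n → ℝ) : x ⬝ᵥ y ≤ norm2 x * norm2 y :=
  Real.sum_mul_le_sqrt_mul_sqrt _ x y

lemma sparse_of_forall_ne_zero_mem {s : ℕ} {T : Finset (Fin n)} {x : Fin n → ℝ}
    (hx : ∀ i, x i ≠ 0 → i ∈ T) (hT : T.card ≤ s) : sparse s x :=
  (Finset.card_le_card fun i hi => hx i (Finset.mem_filter.1 hi).2).trans hT

lemma mem_of_restrict_ne_zero {T : Finset (Fin n)} {x : Fin n → ℝ} {i : Fin n}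
    (h : restrict T x i ≠ 0) : i ∈ T := by
  by_contra hi
  simp [restrict, hi] at h

lemma restrict_dotProduct_restrict (T : Finset (Fin n)) (x : Fin n → ℝ) :
    restrict T x ⬝ᵥ restrict T x = restrict T x ⬝ᵥ x := by
  refine Finset.sum_congr rfl fun i _ => ?_
  by_cases hi : i ∈ T <;> simp [restrict, hi]

end SparseVectors

lemma Matrix.PosSemidef.eigenvectorUnitary_mul_diagonal_sqrt_mul_star {m : Type*} [Fintype m]
    [DecidableEq m] {H : Matrix m m ℝ} (hH : H.PosSemidef) :
    (hH.1.eigenvectorUnitary : Matrix m m ℝ) * diagonal (fun i => √(hH.1.eigenvalues i)) *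
      (star hH.1.eigenvectorUnitary : Matrix m m ℝ) = CFC.sqrt H := by
  rw [CFC.sqrt_eq_real_sqrt H hH.nonneg, cfcₙ_eq_cfc, hH.1.cfc_eq]
  simp [IsHermitian.cfc, Function.comp_def]

lemma precond_eq_inv_sqrt_mul {M N : ℕ} (A : Matrix (Fin M) (Fin N) ℝ) :
    precond A = (CFC.sqrt (A * Aᴴ))⁻¹ * A := by
  rw [precond,
    (posSemidef_self_mul_conjTranspose A).eigenvectorUnitary_mul_diagonal_sqrt_mul_star]

lemma conjTranspose_inv_mul_mul_inv_mul {α : Type*} [CommRing α] [StarRing α] {m n : Type*}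
    [Fintype m] [DecidableEq m] {S : Matrix m m α} (hS : S.IsHermitian) (A : Matrix m n α) :
    (S⁻¹ * A)ᴴ * (S⁻¹ * A) = Aᴴ * (S * S)⁻¹ * A := by
  rw [conjTranspose_mul, conjTranspose_nonsing_inv, hS.eq, Matrix.mul_inv_rev]
  simp only [Matrix.mul_assoc]

section RowSpaceProj

variable {α : Type*} [CommRing α] [StarRing α] {m n : Type*} [Fintype m] [DecidableEq m]
  [Fintype n]

noncomputable def rowSpaceProj (A : Matrix m n α) : Matrix n n α := Aᴴ * (A * Aᴴ)⁻¹ * A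

lemma isHermitian_rowSpaceProj (A : Matrix m n α) : (rowSpaceProj A).IsHermitian := by
  have h : ((A * Aᴴ)⁻¹)ᴴ = (A * Aᴴ)⁻¹ := by
    rw [conjTranspose_nonsing_inv, conjTranspose_mul, conjTranspose_conjTranspose]
  rw [IsHermitian, rowSpaceProj, conjTranspose_mul, conjTranspose_mul,
    conjTranspose_conjTranspose, h, Matrix.mul_assoc]

lemma isIdempotentElem_rowSpaceProj (A : Matrix m n α) (hA : IsUnit (A * Aᴴ).det) :
    IsIdempotentElem (rowSpaceProj A) := by
  have h : (A * Aᴴ)⁻¹ * (A * Aᴴ) = 1 := nonsing_inv_mul _ hA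
  calc rowSpaceProj A * rowSpaceProj A
      = Aᴴ * (((A * Aᴴ)⁻¹ * (A * Aᴴ)) * ((A * Aᴴ)⁻¹ * A)) := by
        simp only [rowSpaceProj, Matrix.mul_assoc]
    _ = rowSpaceProj A := by rw [h, Matrix.one_mul, rowSpaceProj, Matrix.mul_assoc]

end RowSpaceProj

lemma conjTranspose_precond_mul_precond {M N : ℕ} (A : Matrix (Fin M) (Fin N) ℝ) :
    (precond A)ᴴ * precond A = rowSpaceProj A := by
  rw [precond_eq_inv_sqrt_mul, conjTranspose_inv_mul_mul_inv_mul
    (CFC.sqrt_nonneg (A * Aᴴ)).isSelfAdjoint,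
    CFC.sqrt_mul_sqrt_self _ (posSemidef_self_mul_conjTranspose A).nonneg, rowSpaceProj]

lemma norm2_sq_precond_mulVec {M N : ℕ} (A : Matrix (Fin M) (Fin N) ℝ) (x : Fin N → ℝ) :
    norm2 (precond A *ᵥ x) ^ 2 = x ⬝ᵥ rowSpaceProj A *ᵥ x := by
  rw [← conjTranspose_precond_mul_precond, ← mulVec_mulVec, dotProduct_mulVec,
    conjTranspose_eq_transpose_of_trivial, vecMul_transpose, norm2_sq]

lemma dotProduct_mulVec_eq_mulVec_dotProduct_mulVec {n : Type*} [Fintype n]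
    {Q : Matrix n n ℝ} (hH : Q.IsHermitian) (hI : IsIdempotentElem Q) (x y : n → ℝ) :
    x ⬝ᵥ Q *ᵥ y = Q *ᵥ x ⬝ᵥ Q *ᵥ y := by
  have hT : Qᵀ = Q := by rw [← conjTranspose_eq_transpose_of_trivial, hH]
  conv_lhs => rw [← hI.eq, ← mulVec_mulVec, dotProduct_mulVec]
  rw [show x ᵥ* Q = Q *ᵥ x by rw [← vecMul_transpose, hT]]

lemma norm2_sq_mulVec_eq_dotProduct_mulVec {n : ℕ} {Q : Matrix (Fin n) (Fin n) ℝ}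
    (hH : Q.IsHermitian) (hI : IsIdempotentElem Q) (x : Fin n → ℝ) :
    norm2 (Q *ᵥ x) ^ 2 = x ⬝ᵥ Q *ᵥ x := by
  rw [norm2_sq, ← dotProduct_mulVec_eq_mulVec_dotProduct_mulVec hH hI]

lemma le_of_sq_le_mul {a b : ℝ} (hb : 0 ≤ b) (h : a ^ 2 ≤ a * b) : a ≤ b := by
  nlinarith

theorem norm2_restrict_mulVec_le {n : ℕ} {Q : Matrix (Fin n) (Fin n) ℝ} (hH : Q.IsHermitian)
    (hI : IsIdempotentElem Q) {γ : ℝ} (hγ : 0 ≤ γ) (T : Finset (Fin n)) (v : Fin n → ℝ)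
    (hv : norm2 (Q *ᵥ v) ^ 2 ≤ γ * norm2 v ^ 2)
    (hw : norm2 (Q *ᵥ restrict T (Q *ᵥ v)) ^ 2 ≤ γ * norm2 (restrict T (Q *ᵥ v)) ^ 2) :
    norm2 (restrict T (Q *ᵥ v)) ≤ γ * norm2 v := by
  set w := restrict T (Q *ᵥ v)
  have hw0 := norm2_nonneg w
  have hv0 := norm2_nonneg v
  have hcs : norm2 w ^ 2 ≤ norm2 (Q *ᵥ w) * norm2 (Q *ᵥ v) := by
    rw [norm2_sq, restrict_dotProduct_restrict, dotProduct_mulVec_eq_mulVec_dotProduct_mulVec hH hI]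
    exact dotProduct_le_norm2_mul_norm2 _ _
  have hsq : (norm2 w ^ 2) ^ 2 ≤ (norm2 w * (γ * norm2 v)) ^ 2 := by
    calc (norm2 w ^ 2) ^ 2 ≤ norm2 (Q *ᵥ w) ^ 2 * norm2 (Q *ᵥ v) ^ 2 := by
          rw [← mul_pow]; exact pow_le_pow_left₀ (by positivity) hcs 2
      _ ≤ (γ * norm2 w ^ 2) * (γ * norm2 v ^ 2) :=
          mul_le_mul hw hv (by positivity) (by positivity)
      _ = (norm2 w * (γ * norm2 v)) ^ 2 := by ring
  exact le_of_sq_le_mul (by positivity)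
    ((pow_le_pow_iff_left₀ (by positivity) (by positivity) two_ne_zero).1 hsq)

lemma norm2_sq_mulVec_one_sub_rowSpaceProj_le {M N : ℕ} (A : Matrix (Fin M) (Fin N) ℝ)
    (hA : IsUnit (A * Aᴴ).det) {s : ℕ} {γ : ℝ}
    (hγ : ∀ x : Fin N → ℝ, sparse s x → (1 - γ) * norm2 x ^ 2 ≤ norm2 (precond A *ᵥ x) ^ 2)
    {x : Fin N → ℝ} (hx : sparse s x) :
    norm2 ((1 - rowSpaceProj A) *ᵥ x) ^ 2 ≤ γ * norm2 x ^ 2 := by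
  have hγx := hγ x hx
  rw [norm2_sq_mulVec_eq_dotProduct_mulVec (isHermitian_one.sub
      (isHermitian_rowSpaceProj A)) (isIdempotentElem_rowSpaceProj A hA).one_sub,
    sub_mulVec, one_mulVec, dotProduct_sub, ← norm2_sq, ← norm2_sq_precond_mulVec]
  linarith

lemma le_sInf_mul {S : Set ℝ} (hS : S.Nonempty) {a b : ℝ} (hb : 0 ≤ b)
    (h : ∀ γ ∈ S, a ≤ γ * b) : a ≤ sInf S * b := by
  rcases hb.eq_or_lt with rfl | hb
  · obtain ⟨γ, hγ⟩ := hS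
    simpa using h γ hγ
  · exact (div_le_iff₀ hb).1 (le_csInf hS fun γ hγ => (div_le_iff₀ hb).2 (h γ hγ))

theorem stmt1 {M N : ℕ} (A : Matrix (Fin M) (Fin N) ℝ) (hA : IsUnit (A * Aᴴ).det)
    (t : ℕ) (v : Fin N → ℝ) (T' T'' : Finset (Fin N))
    (hv : ∀ i, v i ≠ 0 ↔ i ∈ T'')
    (hT : (T' ∪ T'').card ≤ t) :
    norm2 (restrict T' ((1 - Aᴴ * (A * Aᴴ)⁻¹ * A).mulVec v)) ≤ pripConst A t * norm2 v := by
  have hv_sparse : sparse t v :=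
    sparse_of_forall_ne_zero_mem (fun i hi => Finset.mem_union_right _ ((hv i).1 hi)) hT
  have hw_sparse : sparse t (restrict T' ((1 - rowSpaceProj A) *ᵥ v)) :=
    sparse_of_forall_ne_zero_mem
      (fun i hi => Finset.mem_union_left _ (mem_of_restrict_ne_zero hi)) hT
  refine le_sInf_mul ?_ (norm2_nonneg v) ?_
  · exact ⟨1, zero_le_one, fun x _ => by simp only [sub_self, zero_mul]; positivity⟩
  rintro γ ⟨hγ0, hγ⟩
  exact norm2_restrict_mulVec_le (isHermitian_one.sub (isHermitian_rowSpaceProj A))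
    (isIdempotentElem_rowSpaceProj A hA).one_sub hγ0 T' v
    (norm2_sq_mulVec_one_sub_rowSpaceProj_le A hA hγ hv_sparse)
    (norm2_sq_mulVec_one_sub_rowSpaceProj_le A hA hγ hw_sparse)
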